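/- arXiv:2305.17659 — 3 statements merged into one kernel-verified Lean document; each statement's English description precedes it below -/
import Mathlib

section
/- Let (Ω, 𝓕, P) be a probability space, (M, 𝓜) a measurable space, and K a finite transition kernel from Ω to M. Let φₙ, φ : Ω × M → ℝ (n ∈ ℕ) be 𝓕 ⊗ 𝓜-measurable functions such that φₙ converges to φ in measure with respect to the composition measure P ⊗ K on Ω × M. Suppose there exists an 𝓕 ⊗ 𝓜-measurable function ψ : Ω × M → ℝ such that |φₙ(ω, y)| ≤ ψ(ω, y) for all n, ω, y, and ∫_M ψ(ω, y) K(ω, dy) < ∞ for P-almost every ω. Then the functions ω ↦ ∫_M φₙ(ω, y) K(ω, dy) converge in measure P to the function ω ↦ ∫_M φ(ω, y) K(ω, dy). -/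
open MeasureTheory Filter ProbabilityTheory Topology

/-!
By the subsequence criterion it suffices that every subsequence of `φ n` has a further
subsequence along which the kernel integrals converge `P`-a.e. Convergence in measure on
`P ⊗ₘ K` yields a subsequence converging `P ⊗ₘ K`-a.e., hence, for `P`-a.e. `ω`, converging
`K ω`-a.e. in `y`; for such `ω` dominated convergence with the integrable bound `ψ (ω, ·)`
gives convergence of the integrals.
-/

section KernelIntegral

variable {α β E : Type*} [MeasurableSpace α] [MeasurableSpace β]
  [NormedAddCommGroup E] [NormedSpace ℝ E]
  {μ : Measure α} {κ : Kernel α β} {F : ℕ → α × β → E} {G : α × β → E} {bound : α × β → ℝ}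

theorem tendsto_integral_kernel_ae_of_tendsto_ae_compProd [SFinite μ] [IsSFiniteKernel κ]
    (hF : ∀ n, StronglyMeasurable (F n))
    (h_bound : ∀ n, ∀ᵐ p ∂(μ ⊗ₘ κ), ‖F n p‖ ≤ bound p)
    (bound_integrable : ∀ᵐ x ∂μ, Integrable (fun y => bound (x, y)) (κ x))
    (h_lim : ∀ᵐ p ∂(μ ⊗ₘ κ), Tendsto (fun n => F n p) atTop (𝓝 (G p))) :
    ∀ᵐ x ∂μ, Tendsto (fun n => ∫ y, F n (x, y) ∂κ x) atTop (𝓝 (∫ y, G (x, y) ∂κ x)) := by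
  rw [← ae_all_iff] at h_bound
  filter_upwards [Measure.ae_ae_of_ae_compProd h_bound, Measure.ae_ae_of_ae_compProd h_lim,
    bound_integrable] with x hx_bound hx_lim hx_int
  refine tendsto_integral_of_dominated_convergence _
    (fun n => ((hF n).comp_measurable measurable_prodMk_left).aestronglyMeasurable) hx_int
    (fun n => ?_) hx_lim
  filter_upwards [hx_bound] with y hy using hy n

theorem tendstoInMeasure_integral_kernel_of_tendstoInMeasure_compProd
    [IsFiniteMeasure μ] [IsSFiniteKernel κ]
    (hF : ∀ n, StronglyMeasurable (F n))
    (h_bound : ∀ n, ∀ᵐ p ∂(μ ⊗ₘ κ), ‖F n p‖ ≤ bound p)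
    (bound_integrable : ∀ᵐ x ∂μ, Integrable (fun y => bound (x, y)) (κ x))
    (h_conv : TendstoInMeasure (μ ⊗ₘ κ) F atTop G) :
    TendstoInMeasure μ (fun n x => ∫ y, F n (x, y) ∂κ x) atTop (fun x => ∫ y, G (x, y) ∂κ x) := by
  rw [exists_seq_tendstoInMeasure_atTop_iff
    (fun n => (hF n).integral_kernel_prod_right'.aestronglyMeasurable)]
  intro ns hns
  obtain ⟨ns', hns', h_lim⟩ := (h_conv.comp hns.tendsto_atTop).exists_seq_tendsto_ae
  exact ⟨ns', hns', tendsto_integral_kernel_ae_of_tendsto_ae_compProd (fun n => hF _)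
    (fun n => h_bound _) bound_integrable h_lim⟩

end KernelIntegral

theorem stmt0_general {Ω M : Type*} [MeasurableSpace Ω] [MeasurableSpace M]
    (P : Measure Ω) [IsProbabilityMeasure P]
    (K : Kernel Ω M) [IsFiniteKernel K]
    (φ : ℕ → Ω × M → ℝ) (φlim : Ω × M → ℝ) (ψ : Ω × M → ℝ)
    (hφ : ∀ n, Measurable (φ n)) (hψ : Measurable ψ)
    (hconv : TendstoInMeasure (P.compProd K) φ atTop φlim)
    (hdom : ∀ n ω y, |φ n (ω, y)| ≤ ψ (ω, y))
    (hint : ∀ᵐ ω ∂P, ∫⁻ y, ENNReal.ofReal (ψ (ω, y)) ∂(K ω) < ⊤) :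
    TendstoInMeasure P (fun n ω => ∫ y, φ n (ω, y) ∂(K ω)) atTop
      (fun ω => ∫ y, φlim (ω, y) ∂(K ω)) := by
  have hψ_int : ∀ᵐ ω ∂P, Integrable (fun y => ψ (ω, y)) (K ω) := by
    filter_upwards [hint] with ω hω
    refine ⟨(hψ.comp measurable_prodMk_left).aestronglyMeasurable, ?_⟩
    rwa [hasFiniteIntegral_iff_ofReal
      (Eventually.of_forall fun y => (abs_nonneg _).trans (hdom 0 ω y))]
  exact tendstoInMeasure_integral_kernel_of_tendstoInMeasure_compProd
    (fun n => (hφ n).stronglyMeasurable)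
    (fun n => Eventually.of_forall fun p => hdom n p.1 p.2) hψ_int hconv

/-- Dominated-convergence in measure: if `φ n → φlim` in measure `P ⊗ₘ K` and the `φ n`
are dominated by `ψ` with `∫_M ψ(ω, ·) dK ω < ∞` for `P`-a.e. `ω`, then the kernel integrals
`ω ↦ ∫ φ n (ω, y) dK ω` converge in measure `P` to `ω ↦ ∫ φlim (ω, y) dK ω`. -/
theorem stmt0 {Ω M : Type*} [MeasurableSpace Ω] [MeasurableSpace M]
    (P : Measure Ω) [IsProbabilityMeasure P]
    (K : Kernel Ω M) [IsFiniteKernel K]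
    (φ : ℕ → Ω × M → ℝ) (φlim : Ω × M → ℝ) (ψ : Ω × M → ℝ)
    (hφ : ∀ n, Measurable (φ n)) (hφlim : Measurable φlim) (hψ : Measurable ψ)
    (hconv : TendstoInMeasure (P.compProd K) φ atTop φlim)
    (hdom : ∀ n ω y, |φ n (ω, y)| ≤ ψ (ω, y))
    (hint : ∀ᵐ ω ∂P, ∫⁻ y, ENNReal.ofReal (ψ (ω, y)) ∂(K ω) < ⊤) :
    TendstoInMeasure P (fun n ω => ∫ y, φ n (ω, y) ∂(K ω)) atTop
      (fun ω => ∫ y, φlim (ω, y) ∂(K ω)) :=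
  stmt0_general P K φ φlim ψ hφ hψ hconv hdom hint
end

section
/- Let (Ω, 𝓕) be a measurable space equipped with a filtration (𝓕_t)_{t ≥ 0}, let T : Ω → [0, ∞) be a stopping time with respect to (𝓕_t), and let U : Ω → ℝ be measurable with respect to the stopping-time σ-algebra 𝓕_T. Then the graph [[(T, U)]] = {(t, ω, e) ∈ [0, ∞) × Ω × ℝ : T(ω) = t and U(ω) = e} is progressively measurable jointly with the Borel σ-algebra in e; that is, for every t₀ ≥ 0, the set {(s, ω, e) ∈ (Set.Iic t₀) × Ω × ℝ : T(ω) = s and U(ω) = e} is measurable with respect to the product σ-algebra Borel(Set.Iic t₀) ⊗ 𝓕_{t₀} ⊗ Borel(ℝ). -/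
open MeasureTheory

/-- The graph `[[(T, U)]] = {(t, ω, e) : T ω = t ∧ U ω = e}` of a stopping time `T` and an
`𝓕_T`-measurable random variable `U` is progressively measurable jointly with the Borel
σ-algebra in the variable `e`. -/
theorem stmt2 {Ω : Type*} {m0 : MeasurableSpace Ω}
    (𝓕 : Filtration NNReal m0) (T : Ω → NNReal) (hT : IsStoppingTime 𝓕 (fun ω => (T ω : WithTop NNReal)))
    (U : Ω → ℝ) (hU : Measurable[hT.measurableSpace] U) :
    ∀ t₀ : NNReal,
      @MeasurableSet ((Set.Iic t₀) × Ω × ℝ)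
        (MeasurableSpace.prod inferInstance (MeasurableSpace.prod (𝓕 t₀) inferInstance))
        {p | T p.2.1 = (p.1 : NNReal) ∧ U p.2.1 = p.2.2} := by
  intro t₀
  classical
  set m : MeasurableSpace ((Set.Iic t₀) × Ω × ℝ) :=
    MeasurableSpace.prod inferInstance (MeasurableSpace.prod (𝓕 t₀) inferInstance) with hm
  -- modified functions measurable wrt 𝓕 t₀
  set V : Ω → ℝ := fun ω => if T ω ≤ t₀ then U ω else 0 with hVdef
  have hTle : MeasurableSet[𝓕 t₀] {ω | T ω ≤ t₀} := by
    have h := hT t₀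
    simp only [WithTop.coe_le_coe] at h
    exact h
  have hVmeas : Measurable[𝓕 t₀] V := by
    intro s hs
    have h1 : MeasurableSet[𝓕 t₀] (U ⁻¹' s ∩ {ω | T ω ≤ t₀}) := by
        have h := (hU hs).2 t₀
        simp only [WithTop.coe_le_coe] at h
        exact h
    have hpre : V ⁻¹' s =
        (U ⁻¹' s ∩ {ω | T ω ≤ t₀}) ∪ (if (0 : ℝ) ∈ s then {ω | T ω ≤ t₀}ᶜ else ∅) := by
      ext ω
      by_cases h : T ω ≤ t₀ <;> by_cases h0 : (0 : ℝ) ∈ s <;>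
        simp [hVdef, h, h0]
    rw [hpre]
    refine h1.union ?_
    split_ifs
    · exact hTle.compl
    · exact @MeasurableSet.empty _ (𝓕 t₀)
  have hT'meas : Measurable[𝓕 t₀] (fun ω => min (T ω) t₀) := by
    have h := ((hT.min_const t₀).measurable_of_le fun _ => min_le_right _ _).untopA
    convert h using 1
    funext ω
    rw [← WithTop.coe_min]
    rfl
  -- projections
  have hπΩ : @Measurable _ _ m (𝓕 t₀) (fun p : (Set.Iic t₀) × Ω × ℝ => p.2.1) := by
    exact (@measurable_fst _ _ (𝓕 t₀) _).comp (@measurable_snd _ _ _ _)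
  have hπ1 : Measurable[m] (fun p : (Set.Iic t₀) × Ω × ℝ => (p.1 : NNReal)) :=
    measurable_subtype_coe.comp measurable_fst
  have hπℝ : Measurable[m] (fun p : (Set.Iic t₀) × Ω × ℝ => p.2.2) := by
    exact (@measurable_snd _ _ (𝓕 t₀) _).comp (@measurable_snd _ _ _ _)
  have hSeq : {p : (Set.Iic t₀) × Ω × ℝ | T p.2.1 = (p.1 : NNReal) ∧ U p.2.1 = p.2.2} =
      ({p | min (T p.2.1) t₀ = (p.1 : NNReal)} ∩ {p | T p.2.1 ≤ t₀}) ∩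
        {p | V p.2.1 = p.2.2} := by
    ext p
    simp only [Set.mem_setOf_eq, Set.mem_inter_iff]
    constructor
    · rintro ⟨h1, h2⟩
      have hle : T p.2.1 ≤ t₀ := h1 ▸ p.1.2
      refine ⟨⟨?_, hle⟩, ?_⟩
      · rw [min_eq_left hle, h1]
      · simp [hVdef, hle, h2]
    · rintro ⟨⟨h1, h2⟩, h3⟩
      rw [min_eq_left h2] at h1
      refine ⟨h1, ?_⟩
      simpa [hVdef, h2] using h3
  rw [hSeq]
  refine MeasurableSet.inter (MeasurableSet.inter ?_ ?_) ?_
  · exact measurableSet_eq_fun (hT'meas.comp hπΩ) hπ1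
  · exact hπΩ hTle
  · exact measurableSet_eq_fun (hVmeas.comp hπΩ) hπℝ
end

section
/- Let T > 0, λ > 0, δ > 0, and let π, C₁, C₃ : [0, T] → ℝ be continuous functions. Define Π : [0, T] → ℝ by Π(t) = ( δ⁻¹ · exp(−2 ∫_t^T π(s) λ ds) + ∫_t^T λ (C₁(s)² + C₃(s)²) · exp(−2 ∫_t^s π(r) λ dr) ds )⁻¹. Then the expression inside the inverse is strictly positive for every t ∈ [0, T] (so Π is well defined and Π(t) > 0), Π is differentiable on [0, T], Π(T) = δ, and Π satisfies the Riccati equation Π'(t) + 2 λ π(t) Π(t) − λ (C₁(t)² + C₃(t)²) Π(t)² = 0 for all t ∈ [0, T]. -/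
open MeasureTheory intervalIntegral

/-- The explicit candidate solution of the Riccati equation
`Π' + 2λπΠ − λ(C₁² + C₃²)Π² = 0`, `Π(T) = δ`. -/
noncomputable def riccatiSol (T lam δ : ℝ) (π C₁ C₃ : ℝ → ℝ) : ℝ → ℝ := fun t =>
  (δ⁻¹ * Real.exp (-2 * ∫ s in t..T, π s * lam)
    + ∫ s in t..T, lam * (C₁ s ^ 2 + C₃ s ^ 2) * Real.exp (-2 * ∫ r in t..s, π r * lam))⁻¹

/-- The expression inside the inverse defining `riccatiSol` is strictly positive on `[0, T]`
(hence `Π > 0` there), `Π(T) = δ`, and `Π` is differentiable on `[0, T]` and satisfies the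
Riccati equation `Π'(t) + 2λπ(t)Π(t) − λ(C₁(t)² + C₃(t)²)Π(t)² = 0` there. -/
theorem stmt6 (T lam δ : ℝ) (hT : 0 < T) (hlam : 0 < lam) (hδ : 0 < δ)
    (π C₁ C₃ : ℝ → ℝ) (hπ : Continuous π) (hC₁ : Continuous C₁) (hC₃ : Continuous C₃) :
    (∀ t ∈ Set.Icc 0 T,
      0 < δ⁻¹ * Real.exp (-2 * ∫ s in t..T, π s * lam)
          + ∫ s in t..T, lam * (C₁ s ^ 2 + C₃ s ^ 2) * Real.exp (-2 * ∫ r in t..s, π r * lam)) ∧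
    (∀ t ∈ Set.Icc 0 T, 0 < riccatiSol T lam δ π C₁ C₃ t) ∧
    riccatiSol T lam δ π C₁ C₃ T = δ ∧
    (∀ t ∈ Set.Icc 0 T, ∃ d : ℝ,
      HasDerivWithinAt (riccatiSol T lam δ π C₁ C₃) d (Set.Icc 0 T) t ∧
      d + 2 * lam * π t * riccatiSol T lam δ π C₁ C₃ t
        - lam * (C₁ t ^ 2 + C₃ t ^ 2) * (riccatiSol T lam δ π C₁ C₃ t) ^ 2 = 0) := by
  have hpil : Continuous fun s => π s * lam := hπ.mul continuous_const
  set P : ℝ → ℝ := fun t => ∫ s in (0:ℝ)..t, π s * lam with hPdef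
  have hP : ∀ t, HasDerivAt P (π t * lam) t := fun t =>
    intervalIntegral.integral_hasDerivAt_right (hpil.intervalIntegrable 0 t)
      (hpil.stronglyMeasurableAtFilter _ _) hpil.continuousAt
  have hPc : Continuous P := continuous_iff_continuousAt.2 fun t => (hP t).continuousAt
  set g : ℝ → ℝ := fun s => lam * (C₁ s ^ 2 + C₃ s ^ 2) * Real.exp (-2 * P s) with hgdef
  have hg : Continuous g := by
    apply Continuous.mul
    · exact continuous_const.mul ((hC₁.pow 2).add (hC₃.pow 2))
    · exact Real.continuous_exp.comp (continuous_const.mul hPc)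
  have hgnn : ∀ s, 0 ≤ g s := fun s => by
    have : (0:ℝ) ≤ C₁ s ^ 2 + C₃ s ^ 2 := by positivity
    have := Real.exp_pos (-2 * P s)
    simp only [hgdef]
    positivity
  set c : ℝ := δ⁻¹ * Real.exp (-2 * P T) with hcdef
  have hcpos : 0 < c := by positivity
  set F : ℝ → ℝ := fun t => Real.exp (2 * P t) * (c + ∫ s in t..T, g s) with hFdef
  -- interval integral identity
  have h1 : ∀ a b : ℝ, (∫ s in a..b, π s * lam) = P b - P a := by
    intro a b
    simp only [hPdef]
    exact (intervalIntegral.integral_interval_sub_left (hpil.intervalIntegrable 0 b)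
      (hpil.intervalIntegrable 0 a)).symm
  -- the expression equals F
  have hFeq : ∀ t,
      (δ⁻¹ * Real.exp (-2 * ∫ s in t..T, π s * lam)
        + ∫ s in t..T, lam * (C₁ s ^ 2 + C₃ s ^ 2) * Real.exp (-2 * ∫ r in t..s, π r * lam))
      = F t := by
    intro t
    have h2 : (∫ s in t..T, lam * (C₁ s ^ 2 + C₃ s ^ 2) * Real.exp (-2 * ∫ r in t..s, π r * lam))
        = ∫ s in t..T, Real.exp (2 * P t) * g s := by
      apply intervalIntegral.integral_congr
      intro s _
      simp only [hgdef]
      rw [h1 t s, show (-2:ℝ) * (P s - P t) = 2 * P t + -2 * P s by ring, Real.exp_add]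
      ring
    rw [h2, intervalIntegral.integral_const_mul, h1 t T,
      show (-2:ℝ) * (P T - P t) = 2 * P t + -2 * P T by ring, Real.exp_add,
      hFdef, hcdef]
    ring
  have hFpos : ∀ t ∈ Set.Icc 0 T, 0 < F t := by
    intro t ht
    have hint : 0 ≤ ∫ s in t..T, g s :=
      intervalIntegral.integral_nonneg ht.2 fun s _ => hgnn s
    simp only [hFdef]
    have := Real.exp_pos (2 * P t)
    nlinarith
  -- derivative of F
  have hFd : ∀ t, HasDerivAt F (2 * lam * π t * F t - lam * (C₁ t ^ 2 + C₃ t ^ 2)) t := by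
    intro t
    have hGd : HasDerivAt (fun u => c + ∫ s in u..T, g s) (-(g t)) t := by
      have h := intervalIntegral.integral_hasDerivAt_right (hg.intervalIntegrable T t)
        (hg.stronglyMeasurableAtFilter _ _) hg.continuousAt
      have h' : HasDerivAt (fun u => -∫ s in T..u, g s) (-(g t)) t := h.neg
      have : (fun u => c + ∫ s in u..T, g s) = fun u => c + -∫ s in T..u, g s := by
        funext u; rw [intervalIntegral.integral_symm]
      rw [this]
      exact h'.const_add c
    have hed : HasDerivAt (fun u => Real.exp (2 * P u)) (Real.exp (2 * P t) * (2 * (π t * lam))) t :=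
      (HasDerivAt.exp ((hP t).const_mul 2))
    have hmul : HasDerivAt (fun u => Real.exp (2 * P u) * (c + ∫ s in u..T, g s))
        (Real.exp (2 * P t) * (2 * (π t * lam)) * (c + ∫ s in t..T, g s) + Real.exp (2 * P t) * -g t) t :=
      hed.mul hGd
    have hexp1 : Real.exp (2 * P t) * Real.exp (-2 * P t) = 1 := by
      rw [← Real.exp_add]; norm_num
    convert hmul using 1
    simp only [hFdef, hgdef]
    linear_combination (lam * (C₁ t ^ 2 + C₃ t ^ 2)) * hexp1
  -- riccatiSol as inverse of F
  have hSol : riccatiSol T lam δ π C₁ C₃ = fun t => (F t)⁻¹ := by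
    funext t
    rw [riccatiSol, hFeq t]
  refine ⟨fun t ht => by rw [hFeq t]; exact hFpos t ht,
    fun t ht => by rw [hSol]; exact inv_pos.2 (hFpos t ht), ?_, ?_⟩
  · rw [hSol]
    have hFT : F T = δ⁻¹ := by
      simp only [hFdef, hcdef, intervalIntegral.integral_same, add_zero]
      rw [← mul_assoc, mul_comm (Real.exp (2 * P T)) δ⁻¹, mul_assoc, ← Real.exp_add,
        show (2:ℝ) * P T + -2 * P T = 0 by ring, Real.exp_zero, mul_one]
    show (F T)⁻¹ = δ
    rw [hFT, inv_inv]
  · intro t ht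
    have hFne : F t ≠ 0 := (hFpos t ht).ne'
    refine ⟨-(2 * lam * π t * F t - lam * (C₁ t ^ 2 + C₃ t ^ 2)) / F t ^ 2, ?_, ?_⟩
    · rw [hSol]
      exact ((hFd t).inv hFne).hasDerivWithinAt
    · rw [hSol]
      field_simp
      ring
end
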